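/- arXiv:0806.1321 — 3 statements merged into one kernel-verified Lean document; each statement's English description precedes it below -/
import Mathlib

section
/- In a torsion-free group in which the centralizer of every nontrivial element is cyclic, if every element is n-divisible for every positive integer n, then the centralizer of every nontrivial element is a divisible abelian group — hence no group can simultaneously have all centralizers of nontrivial elements infinite cyclic and all elements divisible, unless the group is trivial. -/
/-- A subgroup `A` of `G` is malnormal if `A ∩ gAg⁻¹ ≠ 1` implies `g ∈ A`. -/
def IsMalnormal {G : Type*} [Group G] (A : Subgroup G) : Prop :=
  ∀ g : G, (∃ x : G, x ≠ 1 ∧ x ∈ A ∧ g⁻¹ * x * g ∈ A) → g ∈ A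

/-- `A` is a maximal abelian subgroup of `G`. -/
def IsMaximalAbelian {G : Type*} [Group G] (A : Subgroup G) : Prop :=
  IsMulCommutative A ∧ ∀ B : Subgroup G, IsMulCommutative B → A ≤ B → B = A

/-- A group is CSA if every maximal abelian subgroup is malnormal. -/
def IsCSA (G : Type*) [Group G] : Prop :=
  ∀ A : Subgroup G, IsMaximalAbelian A → IsMalnormal A

/-!
The centralizer of a nontrivial `x = yⁿ` is abelian and contains both `y` and every `g`
commuting with `x`, so `y` commutes with `g`: roots of elements of `C(g)` stay in `C(g)`.
An infinite cyclic group `⟨z⟩ ≅ ℤ` has no `n`-th root of its generator for `n ≥ 2`,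
so such a centralizer cannot be divisible.
-/

open Subgroup

theorem commute_of_commute_pow {G : Type*} [Group G] {g y : G} {n : ℕ}
    [IsMulCommutative (centralizer {y ^ n})] (h : Commute g (y ^ n)) : Commute g y := by
  have hg : g ∈ centralizer {y ^ n} := mem_centralizer_singleton_iff.2 h
  have hy : y ∈ centralizer {y ^ n} := mem_centralizer_singleton_iff.2 (Commute.self_pow y n)
  exact congrArg Subtype.val (mul_comm' (⟨g, hg⟩ : centralizer {y ^ n}) ⟨y, hy⟩)

theorem pow_ne_of_forall_mem_zpowers {H : Type*} [Group H] [Infinite H] {z : H}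
    (hz : ∀ x, x ∈ zpowers z) {n : ℕ} (hn : 2 ≤ n) (y : H) : y ^ n ≠ z := by
  intro hyz
  obtain ⟨k, rfl⟩ := mem_zpowers_iff.1 (hz y)
  have horder : orderOf z = 0 := by
    rw [orderOf_eq_card_of_forall_mem_zpowers hz, Nat.card_eq_zero_of_infinite]
  have hone : z ^ ((n : ℤ) * k - 1) = 1 := by
    rw [zpow_sub_one, mul_comm, zpow_mul, zpow_natCast, hyz, mul_inv_cancel]
  have := orderOf_dvd_iff_zpow_eq_one.2 hone
  rw [horder, Nat.cast_zero, zero_dvd_iff, sub_eq_zero] at this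
  have := Int.eq_one_of_mul_eq_one_right (by omega) this
  omega

theorem stmt_10_general {G : Type*} [Group G]
    (hcyc : ∀ g : G, g ≠ 1 → IsCyclic (Subgroup.centralizer {g}))
    (hdiv : ∀ g : G, ∀ n : ℕ, 1 ≤ n → ∃ h : G, h ^ n = g) :
    (∀ g : G, g ≠ 1 → ∀ x ∈ Subgroup.centralizer {g}, ∀ n : ℕ, 1 ≤ n →
        ∃ y ∈ Subgroup.centralizer ({g} : Set G), y ^ n = x) ∧
      ((∀ g : G, g ≠ 1 → Infinite (Subgroup.centralizer ({g} : Set G))) →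
        ∀ g : G, g = 1) := by
  have hroot : ∀ g : G, g ≠ 1 → ∀ x ∈ centralizer {g}, ∀ n : ℕ, 1 ≤ n →
      ∃ y ∈ centralizer ({g} : Set G), y ^ n = x := by
    intro g _ x hx n hn
    rcases eq_or_ne x 1 with rfl | hx1
    · exact ⟨1, one_mem _, one_pow n⟩
    obtain ⟨y, rfl⟩ := hdiv x n hn
    have := hcyc _ hx1
    exact ⟨y, mem_centralizer_singleton_iff.2
      (commute_of_commute_pow (mem_centralizer_singleton_iff.1 hx).symm).symm, rfl⟩
  refine ⟨hroot, fun hinf g => by_contra fun hg => ?_⟩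
  have := hcyc g hg
  have := hinf g hg
  obtain ⟨z, hz⟩ := IsCyclic.exists_generator (α := centralizer ({g} : Set G))
  obtain ⟨y, hy, hyz⟩ := hroot g hg z z.2 2 one_le_two
  exact pow_ne_of_forall_mem_zpowers hz le_rfl ⟨y, hy⟩ (Subtype.ext hyz)

theorem stmt_10 {G : Type*} [Group G] (htf : ∀ g : G, g ≠ 1 → ¬IsOfFinOrder g)
    (hcyc : ∀ g : G, g ≠ 1 → IsCyclic (Subgroup.centralizer {g}))
    (hdiv : ∀ g : G, ∀ n : ℕ, 1 ≤ n → ∃ h : G, h ^ n = g) :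
    (∀ g : G, g ≠ 1 → ∀ x ∈ Subgroup.centralizer {g}, ∀ n : ℕ, 1 ≤ n →
        ∃ y ∈ Subgroup.centralizer ({g} : Set G), y ^ n = x) ∧
      ((∀ g : G, g ≠ 1 → Infinite (Subgroup.centralizer ({g} : Set G))) →
        ∀ g : G, g = 1) :=
  stmt_10_general hcyc hdiv
end

section
/- Let G be a group that is the union of an increasing chain of subgroups (G_k) such that for every k, every element of G_k is (k+1)-divisible in G_{k+1}, and all maximal abelian subgroups of G_k are conjugate in G_{k+1}. If G is a CSA-group, then every maximal abelian subgroup of G is divisible and any two maximal abelian subgroups of G are conjugate. -/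
def IsMaximalAbelianWithin {G : Type*} [Group G] (H A : Subgroup G) : Prop :=
  IsMulCommutative A ∧ ∀ C : Subgroup G, C ≤ H → IsMulCommutative C → A ≤ C → C = A

namespace IsMaximalAbelian

variable {G : Type*} [Group G] {A : Subgroup G}

theorem commute (hA : IsMaximalAbelian A) {x y : G} (hx : x ∈ A) (hy : y ∈ A) :
    Commute x y :=
  have := hA.1
  setLike_mul_comm hx hy

theorem map_mulEquiv {G' : Type*} [Group G'] (hA : IsMaximalAbelian A) (e : G ≃* G') :
    IsMaximalAbelian (A.map e.toMonoidHom) := by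
  have := hA.1
  refine ⟨inferInstance, fun C hC hle => ?_⟩
  have hcomap : C.comap e.toMonoidHom = A :=
    hA.2 _ (C.comap_injective_isMulCommutative e.injective) (Subgroup.map_le_iff_le_comap.mp hle)
  rw [← hcomap, Subgroup.map_comap_eq_self_of_surjective e.surjective]

end IsMaximalAbelian

namespace IsCSA

variable {G : Type*} [Group G] {A B : Subgroup G} {a : G}

theorem mem_of_commute (hCSA : IsCSA G) (hA : IsMaximalAbelian A) (ha : a ∈ A) (ha1 : a ≠ 1)
    {g : G} (hga : Commute g a) : g ∈ A :=
  hCSA A hA g ⟨a, ha1, ha, by rwa [mul_assoc, ← hga.eq, ← mul_assoc, inv_mul_cancel, one_mul]⟩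

theorem mem_of_pow_eq (hCSA : IsCSA G) (hA : IsMaximalAbelian A) (ha : a ∈ A) (ha1 : a ≠ 1)
    {b : G} {n : ℕ} (hb : b ^ n = a) : b ∈ A :=
  hCSA.mem_of_commute hA ha ha1 (hb ▸ Commute.self_pow b n)

theorem eq_of_mem_of_mem (hCSA : IsCSA G) (hA : IsMaximalAbelian A) (hB : IsMaximalAbelian B)
    (haA : a ∈ A) (haB : a ∈ B) (ha1 : a ≠ 1) : A = B :=
  le_antisymm (fun _ hx => hCSA.mem_of_commute hB haB ha1 (hA.commute hx haA))
    (fun _ hx => hCSA.mem_of_commute hA haA ha1 (hB.commute hx haB))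

theorem map_conj_eq (hCSA : IsCSA G) (hA : IsMaximalAbelian A) (hB : IsMaximalAbelian B)
    (ha : a ∈ A) (ha1 : a ≠ 1) {t : G} (hta : t * a * t⁻¹ ∈ B) :
    A.map (MulAut.conj t).toMonoidHom = B :=
  hCSA.eq_of_mem_of_mem (hA.map_mulEquiv _) hB ⟨a, ha, rfl⟩ hta
    ((map_ne_one_iff _ (MulAut.conj t).injective).mpr ha1)

theorem isMaximalAbelianWithin_inf (hCSA : IsCSA G) (hA : IsMaximalAbelian A) (ha : a ∈ A)
    (ha1 : a ≠ 1) {H : Subgroup G} (haH : a ∈ H) : IsMaximalAbelianWithin H (A ⊓ H) :=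
  ⟨.of_setLike_mul_comm fun _ hx _ hy => hA.commute hx.1 hy.1,
    fun _ hCH _ hle => le_antisymm
      (le_inf (fun _ hc => hCSA.mem_of_commute hA ha ha1 (setLike_mul_comm hc (hle ⟨ha, haH⟩)))
        hCH) hle⟩

end IsCSA

theorem stmt_11_general {G : Type*} [Group G] (f : ℕ → Subgroup G) (hmono : Monotone f)
    (hunion : ∀ g : G, ∃ k : ℕ, g ∈ f k)
    (hconjstep : ∀ k : ℕ, ∀ A B : Subgroup G, A ≤ f k → B ≤ f k →
      (IsMulCommutative A ∧ ∀ C : Subgroup G, C ≤ f k → IsMulCommutative C → A ≤ C → C = A) →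
      (IsMulCommutative B ∧ ∀ C : Subgroup G, C ≤ f k → IsMulCommutative C → B ≤ C → C = B) →
      ∃ t ∈ f (k + 1), Subgroup.map (MulAut.conj t).toMonoidHom A = B)
    (hdiv : ∀ g : G, ∀ n : ℕ, 1 ≤ n → ∃ h : G, h ^ n = g)
    (hCSA : IsCSA G) :
    (∀ A : Subgroup G, IsMaximalAbelian A → ∀ a ∈ A, ∀ n : ℕ, 1 ≤ n → ∃ b ∈ A, b ^ n = a) ∧
      (∀ A B : Subgroup G, IsMaximalAbelian A → IsMaximalAbelian B →
        ∃ g : G, Subgroup.map (MulAut.conj g).toMonoidHom A = B) := by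
  constructor
  · intro A hA a ha n hn
    obtain rfl | ha1 := eq_or_ne a 1
    · exact ⟨1, A.one_mem, one_pow n⟩
    obtain ⟨b, hb⟩ := hdiv a n hn
    exact ⟨b, hCSA.mem_of_pow_eq hA ha ha1 hb, hb⟩
  · intro A B hA hB
    obtain rfl | ⟨a, ha, ha1⟩ := A.bot_or_exists_ne_one
    · exact ⟨1, by rw [hA.2 B hB.1 bot_le, Subgroup.map_bot]⟩
    obtain rfl | ⟨b, hb, hb1⟩ := B.bot_or_exists_ne_one
    · rw [hB.2 A hA.1 bot_le, Subgroup.mem_bot] at ha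
      exact absurd ha ha1
    obtain ⟨ka, hka⟩ := hunion a
    obtain ⟨kb, hkb⟩ := hunion b
    have hak : a ∈ f (max ka kb) := hmono (le_max_left ka kb) hka
    have hbk : b ∈ f (max ka kb) := hmono (le_max_right ka kb) hkb
    obtain ⟨t, -, ht⟩ := hconjstep _ _ _ inf_le_right inf_le_right
      (hCSA.isMaximalAbelianWithin_inf hA ha ha1 hak)
      (hCSA.isMaximalAbelianWithin_inf hB hb hb1 hbk)
    have hta : t * a * t⁻¹ ∈ (A ⊓ f (max ka kb)).map (MulAut.conj t).toMonoidHom :=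
      ⟨a, ⟨ha, hak⟩, rfl⟩
    exact ⟨t, hCSA.map_conj_eq hA hB ha ha1 (ht ▸ hta).1⟩

theorem stmt_11 {G : Type*} [Group G] (f : ℕ → Subgroup G) (hmono : Monotone f)
    (hunion : ∀ g : G, ∃ k : ℕ, g ∈ f k)
    (hdivstep : ∀ k : ℕ, ∀ g ∈ f k, ∃ h ∈ f (k + 1), h ^ (k + 1) = g)
    (hconjstep : ∀ k : ℕ, ∀ A B : Subgroup G, A ≤ f k → B ≤ f k →
      (IsMulCommutative A ∧ ∀ C : Subgroup G, C ≤ f k → IsMulCommutative C → A ≤ C → C = A) →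
      (IsMulCommutative B ∧ ∀ C : Subgroup G, C ≤ f k → IsMulCommutative C → B ≤ C → C = B) →
      ∃ t ∈ f (k + 1), Subgroup.map (MulAut.conj t).toMonoidHom A = B)
    (hdiv : ∀ g : G, ∀ n : ℕ, 1 ≤ n → ∃ h : G, h ^ n = g)
    (hCSA : IsCSA G) :
    (∀ A : Subgroup G, IsMaximalAbelian A → ∀ a ∈ A, ∀ n : ℕ, 1 ≤ n → ∃ b ∈ A, b ^ n = a) ∧
      (∀ A B : Subgroup G, IsMaximalAbelian A → IsMaximalAbelian B →
        ∃ g : G, Subgroup.map (MulAut.conj g).toMonoidHom A = B) :=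
  stmt_11_general f hmono hunion hconjstep hdiv hCSA
end

section
/- A group G is a CSA-group if and only if G is commutative-transitive and every nontrivial element x satisfies: for all g, if gxg⁻¹ commutes with x then g commutes with x. -/
/-! Let `A` be a maximal abelian subgroup containing `x ≠ 1`. In a CSA-group, anything
commuting with `x` conjugates `x` back into `A`, so lies in `A`; this gives commutative
transitivity, and applied to the conjugate `g x g⁻¹` (which shares a maximal abelian subgroup
with `x`) it gives the conjugation condition. Conversely, commutative transitivity makes the
centralizer of `x` abelian, hence equal to `A` by maximality; if `g⁻¹ x g ∈ A`, the conjugation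
condition puts `g` in that centralizer. -/

def IsCommutativeTransitive (G : Type*) [Group G] : Prop :=
  ∀ a b c : G, a ≠ 1 → b ≠ 1 → c ≠ 1 → Commute a b → Commute b c → Commute a c

section

variable {G : Type*} [Group G]

theorem exists_isMaximalAbelian_le (H : Subgroup G) [IsMulCommutative H] :
    ∃ A : Subgroup G, IsMaximalAbelian A ∧ H ≤ A := by
  obtain ⟨A, hHA, hA⟩ := zorn_le_nonempty₀ {B : Subgroup G | IsMulCommutative B}
    (fun c hc hchain B hB => by
      have : Nonempty c := ⟨⟨B, hB⟩⟩
      have (C : c) : IsMulCommutative C.1 := hc C.2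
      refine ⟨sSup c, ?_, fun C hC => le_sSup hC⟩
      rw [sSup_eq_iSup']
      exact Subgroup.isMulCommutative_iSup hchain.directedOn.directed_val)
    H ‹_›
  exact ⟨A, ⟨hA.prop, fun B hB hAB => le_antisymm (hA.le_of_ge hB hAB) hAB⟩, hHA⟩

theorem exists_isMaximalAbelian_mem_of_commute {a b : G} (h : Commute a b) :
    ∃ A : Subgroup G, IsMaximalAbelian A ∧ a ∈ A ∧ b ∈ A := by
  have : IsMulCommutative (Subgroup.closure {a, b}) := by
    refine Subgroup.isMulCommutative_closure ?_
    rintro x (rfl | rfl) y (rfl | rfl)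
    exacts [rfl, h, h.symm, rfl]
  obtain ⟨A, hA, hle⟩ := exists_isMaximalAbelian_le (Subgroup.closure {a, b})
  exact ⟨A, hA, hle (Subgroup.subset_closure (by simp)),
    hle (Subgroup.subset_closure (by simp))⟩

theorem IsMaximalAbelian.commute_s15 {A : Subgroup G} (hA : IsMaximalAbelian A) {a b : G}
    (ha : a ∈ A) (hb : b ∈ A) : Commute a b :=
  have := hA.1
  setLike_mul_comm ha hb

theorem IsMaximalAbelian.centralizer_eq {A : Subgroup G} (hA : IsMaximalAbelian A) {x : G}
    (hxA : x ∈ A) (hx : IsMulCommutative (Subgroup.centralizer {x})) :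
    Subgroup.centralizer {x} = A :=
  hA.2 _ hx fun _ ha => Subgroup.mem_centralizer_singleton_iff.2 (hA.commute_s15 ha hxA).eq

theorem IsMalnormal.mem_of_commute {A : Subgroup G} (hA : IsMalnormal A) {x g : G} (hx : x ≠ 1)
    (hxA : x ∈ A) (h : Commute g x) : g ∈ A :=
  hA g ⟨x, hx, hxA, by rwa [h.inv_left.eq, inv_mul_cancel_right]⟩

theorem IsCSA.isCommutativeTransitive (hG : IsCSA G) : IsCommutativeTransitive G := by
  intro a b c _ hb _ hab hbc
  obtain ⟨A, hA, haA, hbA⟩ := exists_isMaximalAbelian_mem_of_commute hab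
  exact hA.commute_s15 haA ((hG A hA).mem_of_commute hb hbA hbc.symm)

theorem IsCSA.commute_of_commute_conj (hG : IsCSA G) {x g : G} (hx : x ≠ 1)
    (h : Commute (g * x * g⁻¹) x) : Commute g x := by
  obtain ⟨A, hA, hconjA, hxA⟩ := exists_isMaximalAbelian_mem_of_commute h
  refine hA.commute_s15 (hG A hA g ⟨g * x * g⁻¹, by simpa using hx, hconjA, ?_⟩) hxA
  simpa [mul_assoc] using hxA

theorem IsCommutativeTransitive.isMulCommutative_centralizer (hG : IsCommutativeTransitive G)
    {x : G} (hx : x ≠ 1) : IsMulCommutative (Subgroup.centralizer {x}) := by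
  refine .of_setLike_mul_comm fun a ha b hb => ?_
  rcases eq_or_ne a 1 with rfl | ha1
  · simp
  rcases eq_or_ne b 1 with rfl | hb1
  · simp
  exact hG a x b ha1 hx hb1 (Subgroup.mem_centralizer_singleton_iff.1 ha)
    (Subgroup.mem_centralizer_singleton_iff.1 hb).symm

theorem IsCommutativeTransitive.isCSA (hG : IsCommutativeTransitive G)
    (hconj : ∀ x : G, x ≠ 1 → ∀ g : G, Commute (g * x * g⁻¹) x → Commute g x) :
    IsCSA G := by
  rintro A hA g ⟨x, hx, hxA, hconjA⟩
  have hconj_inv : Commute (g⁻¹ * x * g⁻¹⁻¹) x := by simpa using hA.commute_s15 hconjA hxA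
  have hg : Commute g x := by simpa using (hconj x hx g⁻¹ hconj_inv).inv_left
  rw [← hA.centralizer_eq hxA (hG.isMulCommutative_centralizer hx)]
  exact Subgroup.mem_centralizer_singleton_iff.2 hg.eq

end

theorem stmt_15 {G : Type*} [Group G] :
    IsCSA G ↔
      ((∀ a b c : G, a ≠ 1 → b ≠ 1 → c ≠ 1 → Commute a b → Commute b c → Commute a c) ∧
        ∀ x : G, x ≠ 1 → ∀ g : G, Commute (g * x * g⁻¹) x → Commute g x) :=
  ⟨fun hG => ⟨hG.isCommutativeTransitive, fun _ hx _ => hG.commute_of_commute_conj hx⟩,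
    fun ⟨hct, hconj⟩ => IsCommutativeTransitive.isCSA hct hconj⟩
end
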